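/- arXiv:1509.03798 — 5 statements merged into one kernel-verified Lean document; each statement's English description precedes it below -/
import Mathlib

section
/- Let K be an Archimedean totally ordered field with no proper Archimedean ordered field extension (Hilbert complete). Then K is Dedekind complete. -/
/-! Every Archimedean ordered field embeds into `ℝ`; Hilbert completeness makes this embedding
onto, so `K` is order isomorphic to `ℝ` and inherits its least-upper-bound property. -/

theorem archimedean_of_forall_abs_le_natCast {K : Type*} [Field K] [LinearOrder K]
    [IsStrictOrderedRing K] (h : ∀ x : K, ∃ n : ℕ, |x| ≤ n) : Archimedean K :=
  archimedean_iff_nat_le.2 fun x => (h x).imp fun _ => (le_abs_self x).trans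

theorem OrderRingHom.strictMono_of_divisionRing {α β : Type*} [DivisionRing α] [PartialOrder α]
    [Semiring β] [Nontrivial β] [PartialOrder β] (f : α →+*o β) : StrictMono f :=
  (OrderHomClass.monotone f).strictMono_of_injective f.toRingHom.injective

theorem OrderIso.exists_isLUB {α β : Type*} [Preorder α] [ConditionallyCompleteLattice β]
    (e : α ≃o β) {S : Set α} (hS : S.Nonempty) (hbdd : BddAbove S) : ∃ a, IsLUB S a :=
  ⟨e.symm (sSup (e '' S)),
    e.isLUB_image.1 (isLUB_csSup (hS.image e) (e.bddAbove_image.2 hbdd))⟩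

/-- A Hilbert complete Archimedean ordered field (one with no proper Archimedean ordered
field extension) is Dedekind complete. -/
theorem hilbert_complete_implies_dedekind_complete
    {K : Type} [Field K] [LinearOrder K] [IsStrictOrderedRing K]
    (harchK : ∀ x : K, ∃ n : ℕ, |x| ≤ n)
    (hHilbert : ∀ (A : Type) [Field A] [LinearOrder A] [IsStrictOrderedRing A],
      (∀ x : A, ∃ n : ℕ, |x| ≤ n) →
      ∀ f : K →+* A, StrictMono f → Function.Surjective f) :
    ∀ S : Set K, S.Nonempty → BddAbove S → ∃ a : K, IsLUB S a := by
  have := archimedean_of_forall_abs_le_natCast harchK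
  let f := ConditionallyCompleteLinearOrderedField.inducedOrderRingHom K ℝ
  have hf : StrictMono f := f.strictMono_of_divisionRing
  have hsurj : Function.Surjective f :=
    hHilbert ℝ (fun x => exists_nat_ge |x|) f hf
  exact fun S hS hbdd => (hf.orderIsoOfSurjective f hsurj).exists_isLUB hS hbdd
end

section
/- Let K be a totally ordered field that is Cantor κ-complete for some uncountable cardinal κ > card(K), meaning every family of fewer than κ closed bounded intervals with the finite intersection property has nonempty intersection. Then K is Archimedean. -/
/-!
If `K` is not Archimedean, pick an infinite element `c`. For each `y : K` choose an interval
`[N, b]` with `N` a natural number, `b` infinite and `y ∉ [N, b]`: for finite `y` take `N > y`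
and `b = c`, for infinite `y` take `N = 0` and `b = y - 1`. Any finitely many of these
intervals contain the largest of their `N`s, so Cantor completeness for families indexed by `K`
yields a point `z` in all of them, in particular in the one chosen to avoid `z`.
-/

section

variable {K : Type*} [Ring K] [LinearOrder K] [IsStrictOrderedRing K]

theorem exists_nat_Icc_notMem_of_forall_nat_le {c : K} (hc : ∀ n : ℕ, (n : K) ≤ c) (y : K) :
    ∃ (N : ℕ) (b : K), (∀ n : ℕ, (n : K) ≤ b) ∧ y ∉ Set.Icc (N : K) b := by
  by_cases hy : ∀ n : ℕ, (n : K) ≤ y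
  · refine ⟨0, y - 1, fun n => le_sub_iff_add_le.mpr ?_, fun h => (sub_one_lt y).not_ge h.2⟩
    exact_mod_cast hy (n + 1)
  · obtain ⟨N, hN⟩ := not_forall.mp hy
    exact ⟨N, c, hc, fun h => hN h.1⟩

theorem exists_forall_mem_Icc_of_forall_nat_le {ι : Type*} (N : ι → ℕ) (b : ι → K)
    (hb : ∀ i, ∀ n : ℕ, (n : K) ≤ b i) (s : Finset ι) :
    ∃ x : K, ∀ i ∈ s, x ∈ Set.Icc (N i : K) (b i) :=
  ⟨(s.sup N : ℕ), fun i hi => ⟨Nat.cast_le.mpr (Finset.le_sup hi), hb i _⟩⟩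

end

theorem cantor_kappa_complete_implies_archimedean_general
    {K : Type} [Field K] [LinearOrder K] [IsStrictOrderedRing K] (κ : Cardinal)
    (hcard : Cardinal.mk K < κ)
    (hcantor : ∀ (Γ : Type), Cardinal.mk Γ < κ → ∀ a b : Γ → K,
      (∀ s : Finset Γ, ∃ x : K, ∀ γ ∈ s, x ∈ Set.Icc (a γ) (b γ)) →
      ∃ x : K, ∀ γ : Γ, x ∈ Set.Icc (a γ) (b γ)) :
    ∀ x : K, ∃ n : ℕ, |x| ≤ n := by
  by_contra! ⟨x, hx⟩
  choose N b hb hnotMem using exists_nat_Icc_notMem_of_forall_nat_le (fun n => (hx n).le)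
  obtain ⟨z, hz⟩ := hcantor K hcard (fun y => N y) b
    (exists_forall_mem_Icc_of_forall_nat_le N b hb)
  exact hnotMem z (hz z)

/-- If a totally ordered field `K` is Cantor `κ`-complete for some uncountable cardinal
`κ > card K`, then `K` is Archimedean. -/
theorem cantor_kappa_complete_implies_archimedean
    {K : Type} [Field K] [LinearOrder K] [IsStrictOrderedRing K] (κ : Cardinal)
    (huncount : Cardinal.aleph0 < κ)
    (hcard : Cardinal.mk K < κ)
    (hcantor : ∀ (Γ : Type), Cardinal.mk Γ < κ → ∀ a b : Γ → K,
      (∀ s : Finset Γ, ∃ x : K, ∀ γ ∈ s, x ∈ Set.Icc (a γ) (b γ)) →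
      ∃ x : K, ∀ γ : Γ, x ∈ Set.Icc (a γ) (b γ)) :
    ∀ x : K, ∃ n : ℕ, |x| ≤ n :=
  cantor_kappa_complete_implies_archimedean_general κ hcard hcantor
end

section
/- Let K be a totally ordered field and κ an uncountable cardinal. Then K is algebraically κ-saturated (every family of fewer than κ bounded open intervals with the finite intersection property has nonempty intersection) if and only if K is Cantor κ-complete (same property for closed bounded intervals) and κ ≤ cof(K), where cof(K) is the cofinality of K, i.e., the least cardinality of an unbounded-above subset of K. -/
/-!
Saturation gives Cantor completeness: if two of the closed intervals share an endpoint, that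
endpoint lies in all of them; otherwise the open intervals still have the finite intersection
property. It gives `κ ≤ cof K`: a point of `⋂ (0, (|g| + 1)⁻¹)` is a positive `x` with `A ≤ x⁻¹`.
Conversely, bounding the `< κ` many numbers `(b δ - a γ)⁻¹` yields a uniform gap `2ε` between
left and right endpoints, so the closed intervals `[a γ + ε, b γ - ε]` have the finite
intersection property and any point common to all of them lies in every `(a γ, b γ)`.
-/

open Set

section Intervals

variable {ι α : Type*} [LinearOrder α] {a b : ι → α}

theorem lt_of_forall_finset_exists_mem_Ioo
    (h : ∀ s : Finset ι, ∃ x, ∀ i ∈ s, x ∈ Ioo (a i) (b i)) (i j : ι) : a i < b j := by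
  classical
  obtain ⟨x, hx⟩ := h {i, j}
  exact (hx i (by simp)).1.trans (hx j (by simp)).2

theorem le_of_forall_finset_exists_mem_Icc
    (h : ∀ s : Finset ι, ∃ x, ∀ i ∈ s, x ∈ Icc (a i) (b i)) (i j : ι) : a i ≤ b j := by
  classical
  obtain ⟨x, hx⟩ := h {i, j}
  exact (hx i (by simp)).1.trans (hx j (by simp)).2

theorem exists_forall_mem_Ioo_of_forall_lt [DenselyOrdered α] [Nonempty α]
    (h : ∀ i j, a i < b j) (s : Finset ι) : ∃ x, ∀ i ∈ s, x ∈ Ioo (a i) (b i) := by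
  rcases s.eq_empty_or_nonempty with rfl | hs
  · exact ⟨Classical.arbitrary α, by simp⟩
  obtain ⟨i, -, hi⟩ := s.exists_max_image a hs
  obtain ⟨j, -, hj⟩ := s.exists_min_image b hs
  obtain ⟨x, hax, hxb⟩ := exists_between (h i j)
  exact ⟨x, fun k hk => ⟨(hi k hk).trans_lt hax, hxb.trans_le (hj k hk)⟩⟩

theorem exists_forall_mem_Icc_of_forall_le [Nonempty α]
    (h : ∀ i j, a i ≤ b j) (s : Finset ι) : ∃ x, ∀ i ∈ s, x ∈ Icc (a i) (b i) := by
  rcases s.eq_empty_or_nonempty with rfl | hs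
  · exact ⟨Classical.arbitrary α, by simp⟩
  obtain ⟨i, -, hi⟩ := s.exists_max_image a hs
  exact ⟨a i, fun k hk => ⟨hi k hk, h i k⟩⟩

end Intervals

theorem exists_pos_forall_le_of_bddAbove_range_inv {ι K : Type*} [Field K] [LinearOrder K]
    [IsStrictOrderedRing K] {f : ι → K} (hf : ∀ i, 0 < f i)
    (hbdd : BddAbove (range fun i => (f i)⁻¹)) : ∃ ε > 0, ∀ i, ε ≤ f i := by
  obtain ⟨M, hM⟩ := hbdd
  refine ⟨(|M| + 1)⁻¹, by positivity, fun i => ?_⟩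
  have hle : (f i)⁻¹ ≤ |M| + 1 :=
    (hM (mem_range_self i)).trans ((le_abs_self M).trans (lt_add_one _).le)
  simpa using inv_anti₀ (inv_pos.2 (hf i)) hle

section Saturation

variable (κ : Cardinal.{0}) (α : Type*) [LinearOrder α]

def AlgebraicallySaturated : Prop :=
  ∀ (Γ : Type), Cardinal.mk Γ < κ → ∀ a b : Γ → α,
    (∀ s : Finset Γ, ∃ x, ∀ γ ∈ s, x ∈ Ioo (a γ) (b γ)) → ∃ x, ∀ γ, x ∈ Ioo (a γ) (b γ)

def CantorComplete : Prop :=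
  ∀ (Γ : Type), Cardinal.mk Γ < κ → ∀ a b : Γ → α,
    (∀ s : Finset Γ, ∃ x, ∀ γ ∈ s, x ∈ Icc (a γ) (b γ)) → ∃ x, ∀ γ, x ∈ Icc (a γ) (b γ)

variable {κ α}

theorem AlgebraicallySaturated.cantorComplete [DenselyOrdered α] [Nonempty α]
    (hS : AlgebraicallySaturated κ α) : CantorComplete κ α := by
  intro Γ hΓ a b hfip
  have hle := le_of_forall_finset_exists_mem_Icc hfip
  by_cases hcommon : ∃ γ δ, a γ = b δ
  · obtain ⟨γ, δ, hγδ⟩ := hcommon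
    exact ⟨a γ, fun η => ⟨hγδ ▸ hle η δ, hle γ η⟩⟩
  · push Not at hcommon
    have hlt : ∀ γ δ, a γ < b δ := fun γ δ => (hle γ δ).lt_of_ne (hcommon γ δ)
    obtain ⟨x, hx⟩ := hS Γ hΓ a b (exists_forall_mem_Ioo_of_forall_lt hlt)
    exact ⟨x, fun γ => Ioo_subset_Icc_self (hx γ)⟩

variable {K : Type} [Field K] [LinearOrder K] [IsStrictOrderedRing K]

theorem AlgebraicallySaturated.bddAbove (hS : AlgebraicallySaturated κ K) {A : Set K}
    (hA : Cardinal.mk A < κ) : BddAbove A := by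
  have hpos : ∀ g : A, (0 : K) < (|(g : K)| + 1)⁻¹ := fun _ => by positivity
  obtain ⟨x, hx⟩ := hS A hA (fun _ => 0) (fun g => (|(g : K)| + 1)⁻¹)
    (exists_forall_mem_Ioo_of_forall_lt fun _ => hpos)
  refine ⟨x⁻¹, fun g hg => ?_⟩
  obtain ⟨hx0, hxg⟩ := hx ⟨g, hg⟩
  have hgx : |g| + 1 < x⁻¹ := by simpa using (inv_lt_inv₀ (hpos ⟨g, hg⟩) hx0).2 hxg
  linarith [le_abs_self g]

theorem AlgebraicallySaturated.of_cantorComplete (hκ : Cardinal.aleph0 ≤ κ)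
    (hC : CantorComplete κ K) (hcof : ∀ A : Set K, Cardinal.mk A < κ → BddAbove A) :
    AlgebraicallySaturated κ K := by
  intro Γ hΓ a b hfip
  have hlt := lt_of_forall_finset_exists_mem_Ioo hfip
  have hpairs : Cardinal.mk (Γ × Γ) < κ := by
    simpa using Cardinal.mul_lt_of_lt hκ hΓ hΓ
  obtain ⟨ε, hε, hgap⟩ := exists_pos_forall_le_of_bddAbove_range_inv
    (f := fun p : Γ × Γ => (b p.2 - a p.1) / 2) (fun p => by linarith [hlt p.1 p.2])
    (hcof _ (Cardinal.mk_range_le.trans_lt hpairs))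
  have hshrunk : ∀ γ δ, a γ + ε ≤ b δ - ε := fun γ δ => by linarith [hgap (γ, δ)]
  obtain ⟨x, hx⟩ := hC Γ hΓ (fun γ => a γ + ε) (fun γ => b γ - ε)
    (exists_forall_mem_Icc_of_forall_le hshrunk)
  exact ⟨x, fun γ => ⟨by linarith [(hx γ).1], by linarith [(hx γ).2]⟩⟩

end Saturation

/-- For an uncountable cardinal `κ`, a totally ordered field is algebraically
`κ`-saturated iff it is Cantor `κ`-complete and `κ ≤ cof K` (i.e., every subset of
cardinality `< κ` is bounded above). -/
theorem saturated_iff_cantor_complete_and_cofinality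
    {K : Type} [Field K] [LinearOrder K] [IsStrictOrderedRing K] (κ : Cardinal)
    (huncount : Cardinal.aleph0 < κ) :
    (∀ (Γ : Type), Cardinal.mk Γ < κ → ∀ a b : Γ → K,
      (∀ s : Finset Γ, ∃ x : K, ∀ γ ∈ s, x ∈ Set.Ioo (a γ) (b γ)) →
      ∃ x : K, ∀ γ : Γ, x ∈ Set.Ioo (a γ) (b γ)) ↔
    ((∀ (Γ : Type), Cardinal.mk Γ < κ → ∀ a b : Γ → K,
      (∀ s : Finset Γ, ∃ x : K, ∀ γ ∈ s, x ∈ Set.Icc (a γ) (b γ)) →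
      ∃ x : K, ∀ γ : Γ, x ∈ Set.Icc (a γ) (b γ)) ∧
     (∀ A : Set K, Cardinal.mk A < κ → BddAbove A)) :=
  show AlgebraicallySaturated κ K ↔ CantorComplete κ K ∧ _ from
    ⟨fun hS => ⟨hS.cantorComplete, fun _ => hS.bddAbove⟩,
      fun ⟨hC, hcof⟩ => .of_cantorComplete huncount.le hC hcof⟩
end

section
/- Let K be a totally ordered field that is algebraically ℵ₁-saturated, i.e., every countable family of open intervals with the finite intersection property has nonempty intersection. Then K is sequentially complete: every Cauchy sequence in K converges (in fact, every Cauchy sequence is eventually constant). -/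
/-!
The countably many nonzero distances `|x m - x n|` between terms of a sequence are positive, so
saturation gives a single `ε > 0` below all of them. Beyond the index where the Cauchy condition
holds for this `ε`, all distances are `< ε`, hence zero: the sequence is eventually constant.
-/

open Set

def IsCountablySaturated (α : Type*) [Preorder α] : Prop :=
  ∀ a b : ℕ → α, (∀ s : Finset ℕ, ∃ x, ∀ n ∈ s, x ∈ Ioo (a n) (b n)) →
    ∃ x, ∀ n, x ∈ Ioo (a n) (b n)

namespace IsCountablySaturated

variable {α : Type*} [LinearOrder α] [DenselyOrdered α]

theorem exists_between {ι : Type*} [Countable ι] [Nonempty ι] (hα : IsCountablySaturated α)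
    {a : α} {b : ι → α} (hab : ∀ i, a < b i) : ∃ x, a < x ∧ ∀ i, x < b i := by
  obtain ⟨f, hf⟩ := exists_surjective_nat ι
  have finite_inter : ∀ s : Finset ℕ, ∃ x, ∀ n ∈ s, x ∈ Ioo a (b (f n)) := by
    intro s
    rcases s.eq_empty_or_nonempty with rfl | hs
    · exact ⟨a, by simp⟩
    · obtain ⟨x, hax, hx⟩ :=
        _root_.exists_between ((Finset.lt_inf'_iff hs).mpr fun n _ => hab (f n))
      exact ⟨x, fun n hn => ⟨hax, hx.trans_le (Finset.inf'_le _ hn)⟩⟩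
  obtain ⟨x, hx⟩ := hα (fun _ => a) (b ∘ f) finite_inter
  refine ⟨x, (hx 0).1, fun i => ?_⟩
  obtain ⟨n, rfl⟩ := hf i
  exact (hx n).2

end IsCountablySaturated

theorem IsCountablySaturated.exists_pos_le_abs_sub
    {K : Type*} [Field K] [LinearOrder K] [IsStrictOrderedRing K] (hK : IsCountablySaturated K)
    (x : ℕ → K) :
    ∃ ε > 0, ∀ m n, x m ≠ x n → ε ≤ |x m - x n| := by
  -- the value `1` on pairs with equal terms only keeps every entry positive
  let gap : ℕ × ℕ → K := fun p => if x p.1 = x p.2 then 1 else |x p.1 - x p.2|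
  have gap_pos : ∀ p, 0 < gap p := by
    intro p
    by_cases h : x p.1 = x p.2
    · simp [gap, h]
    · simpa [gap, h] using sub_ne_zero.mpr h
  obtain ⟨ε, hε, hεgap⟩ := hK.exists_between gap_pos
  refine ⟨ε, hε, fun m n hmn => ?_⟩
  simpa [gap, hmn] using (hεgap (m, n)).le

theorem eventually_const_of_cauchy_of_le_abs_sub {K : Type*} [AddGroup K] [Lattice K]
    {x : ℕ → K}
    (hx : ∀ ε : K, 0 < ε → ∃ N : ℕ, ∀ n ≥ N, ∀ m ≥ N, |x n - x m| < ε)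
    {ε : K} (hε : 0 < ε) (hgap : ∀ m n, x m ≠ x n → ε ≤ |x m - x n|) :
    ∃ N, ∀ n ≥ N, x n = x N := by
  obtain ⟨N, hN⟩ := hx ε hε
  refine ⟨N, fun n hn => ?_⟩
  by_contra hne
  exact (hgap n N hne).not_gt (hN n hn N le_rfl)

/-- An algebraically ℵ₁-saturated ordered field is sequentially complete: every Cauchy
sequence converges (indeed, is eventually constant). -/
theorem aleph1_saturated_implies_sequentially_complete
    {K : Type*} [Field K] [LinearOrder K] [IsStrictOrderedRing K]
    (hsat : ∀ a b : ℕ → K,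
      (∀ s : Finset ℕ, ∃ x : K, ∀ n ∈ s, x ∈ Set.Ioo (a n) (b n)) →
      ∃ x : K, ∀ n : ℕ, x ∈ Set.Ioo (a n) (b n)) :
    ∀ x : ℕ → K,
      (∀ ε : K, 0 < ε → ∃ N : ℕ, ∀ n ≥ N, ∀ m ≥ N, |x n - x m| < ε) →
      ∃ L : K, (∀ ε : K, 0 < ε → ∃ N : ℕ, ∀ n ≥ N, |x n - L| < ε) ∧
        ∃ N : ℕ, ∀ n ≥ N, x n = L := by
  intro x hx
  have hK : IsCountablySaturated K := hsat
  obtain ⟨ε, hε, hgap⟩ := hK.exists_pos_le_abs_sub x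
  obtain ⟨N, hconst⟩ := eventually_const_of_cauchy_of_le_abs_sub hx hε hgap
  refine ⟨x N, fun δ hδ => ⟨N, fun n hn => ?_⟩, N, hconst⟩
  simpa [hconst n hn] using hδ
end

section
/- Let K be a non-Archimedean totally ordered field that is Cantor κ-complete for an uncountable cardinal κ (every family of fewer than κ closed bounded intervals with the finite intersection property has nonempty intersection). Then κ ≤ card(K). -/
/-!
The elements of `K` bounded by a natural number form a lower set `S` with no greatest element,
whose complement is nonempty (as `K` is non-Archimedean) and has no least element. Attaching to
each `x ∈ S` the interval `[x, t₀]` and to each `x ∉ S` the interval `[s₀, x]`, for fixed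
`s₀ ∈ S` and `t₀ ∉ S`, gives a family with the finite intersection property, while a common point
would be a greatest element of `S` or a least element of its complement. Being indexed by `K`,
this family has fewer than `κ` members unless `κ ≤ card K`.
-/

open Set

section Gap

variable {α : Type*} [LinearOrder α] {S : Set α} {s₀ t₀ : α}

theorem exists_Icc_family_of_gap (hS : IsLowerSet S) (hs₀ : s₀ ∈ S) (ht₀ : t₀ ∉ S)
    (hmax : ∀ s ∈ S, ∃ s' ∈ S, s < s') (hmin : ∀ t ∉ S, ∃ t' ∉ S, t' < t) :
    ∃ a b : α → α, (∀ s : Finset α, ∃ x, ∀ γ ∈ s, x ∈ Icc (a γ) (b γ)) ∧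
      ¬ ∃ x, ∀ γ, x ∈ Icc (a γ) (b γ) := by
  classical
  have lt_of_mem_not_mem {s t : α} (hs : s ∈ S) (ht : t ∉ S) : s < t :=
    lt_of_not_ge fun hts => ht (hS hts hs)
  refine ⟨fun γ => if γ ∈ S then γ else s₀, fun γ => if γ ∈ S then t₀ else γ, ?_, ?_⟩
  · intro s
    set u := insert s₀ (s.filter (· ∈ S))
    have hu : u.Nonempty := Finset.insert_nonempty _ _
    have hmem : u.max' hu ∈ S := by
      obtain h | h := Finset.mem_insert.1 (u.max'_mem hu)
      · exact h ▸ hs₀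
      · exact (Finset.mem_filter.1 h).2
    refine ⟨u.max' hu, fun γ hγ => ?_⟩
    by_cases hγS : γ ∈ S
    · simp only [hγS, if_true]
      exact ⟨u.le_max' γ (Finset.mem_insert_of_mem (Finset.mem_filter.2 ⟨hγ, hγS⟩)),
        (lt_of_mem_not_mem hmem ht₀).le⟩
    · simp only [hγS, if_false]
      exact ⟨u.le_max' s₀ (Finset.mem_insert_self _ _), (lt_of_mem_not_mem hmem hγS).le⟩
  · rintro ⟨x, hx⟩
    by_cases hxS : x ∈ S
    · obtain ⟨s', hs'S, hxs'⟩ := hmax x hxS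
      have := (hx s').1
      simp only [hs'S, if_true] at this
      exact hxs'.not_ge this
    · obtain ⟨t', ht'S, ht'x⟩ := hmin x hxS
      have := (hx t').2
      simp only [ht'S, if_false] at this
      exact ht'x.not_ge this

end Gap

section NatCastBounded

theorem isLowerSet_setOf_le_natCast {α : Type*} [Preorder α] [NatCast α] :
    IsLowerSet {x : α | ∃ n : ℕ, x ≤ n} :=
  fun _ _ hba ⟨n, hn⟩ => ⟨n, hba.trans hn⟩

variable {R : Type*} [Ring R] [LinearOrder R] [IsStrictOrderedRing R]

theorem exists_gt_of_le_natCast {x : R} {n : ℕ} (hx : x ≤ n) :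
    ∃ y ∈ {x : R | ∃ n : ℕ, x ≤ n}, x < y :=
  ⟨x + 1, ⟨n + 1, by push_cast; exact add_le_add_left hx 1⟩, lt_add_one x⟩

theorem exists_lt_of_forall_not_le_natCast {x : R} (hx : ¬ ∃ n : ℕ, x ≤ n) :
    ∃ y ∉ {x : R | ∃ n : ℕ, x ≤ n}, y < x :=
  ⟨x - 1, fun ⟨n, hn⟩ => hx ⟨n + 1, by push_cast; exact sub_le_iff_le_add.1 hn⟩, sub_one_lt x⟩

end NatCastBounded

theorem cantor_complete_nonarchimedean_cardinality_general
    {K : Type} [Field K] [LinearOrder K] [IsStrictOrderedRing K] (κ : Cardinal)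
    (hnonarch : ¬ ∀ x : K, ∃ n : ℕ, |x| ≤ n)
    (hcantor : ∀ (Γ : Type), Cardinal.mk Γ < κ → ∀ a b : Γ → K,
      (∀ s : Finset Γ, ∃ x : K, ∀ γ ∈ s, x ∈ Set.Icc (a γ) (b γ)) →
      ∃ x : K, ∀ γ : Γ, x ∈ Set.Icc (a γ) (b γ)) :
    κ ≤ Cardinal.mk K := by
  by_contra hlt
  obtain ⟨x₀, hx₀⟩ := not_forall.1 hnonarch
  obtain ⟨a, b, hfip, hempty⟩ := exists_Icc_family_of_gap (S := {x : K | ∃ n : ℕ, x ≤ n})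
    isLowerSet_setOf_le_natCast ⟨0, Nat.cast_zero.ge⟩ hx₀
    (fun _ ⟨_, hn⟩ => exists_gt_of_le_natCast hn) (fun _ hx => exists_lt_of_forall_not_le_natCast hx)
  exact hempty (hcantor K (not_le.1 hlt) a b hfip)

/-- If a non-Archimedean totally ordered field `K` is Cantor `κ`-complete for an
uncountable cardinal `κ`, then `κ ≤ card K`. -/
theorem cantor_complete_nonarchimedean_cardinality
    {K : Type} [Field K] [LinearOrder K] [IsStrictOrderedRing K] (κ : Cardinal)
    (huncount : Cardinal.aleph0 < κ)
    (hnonarch : ¬ ∀ x : K, ∃ n : ℕ, |x| ≤ n)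
    (hcantor : ∀ (Γ : Type), Cardinal.mk Γ < κ → ∀ a b : Γ → K,
      (∀ s : Finset Γ, ∃ x : K, ∀ γ ∈ s, x ∈ Set.Icc (a γ) (b γ)) →
      ∃ x : K, ∀ γ : Γ, x ∈ Set.Icc (a γ) (b γ)) :
    κ ≤ Cardinal.mk K :=
  cantor_complete_nonarchimedean_cardinality_general κ hnonarch hcantor
end
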